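/- arXiv:1910.14656 — 11 statements merged into one kernel-verified Lean document; each statement's English description precedes it below -/
import Mathlib

section
/- Let k > 1 and let f : ℝ → ℝ be a positive, continuously differentiable function. Suppose I, R : ℝ → ℝ are differentiable and satisfy, for all t ∈ ℝ, the system I'(t) = I(t)·(f(R(t))·(1 − I(t) − R(t)) − k) and R'(t) = (k−1)·I(t) − R(t); suppose moreover that there is T > 0 with I(t + T) = I(t) and R(t + T) = R(t) for all t ∈ ℝ, and that I(t) > 0 for all t ∈ ℝ. Then I and R are constant functions. -/
/-- Key algebraic identity behind the Lyapunov function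
`V = Ψ(R) + q - log q`, `q = (k-1)I/R`, `Ψ' (r) = -(f r * (1 - r - r/(k-1)) - k)/r`. -/
lemma sir_key_identity (k A B F0 : ℝ) (hk : 1 < k) (hA : A ≠ 0) (hB : B ≠ 0) :
    (-(F0 * (1 - B - B / (k - 1)) - k) / B) * ((k - 1) * A - B)
      + ((k - 1) * (A * (F0 * (1 - A - B) - k)) * B
          - (k - 1) * A * ((k - 1) * A - B)) / B ^ 2
      - ((k - 1) * A / B)⁻¹ *
          (((k - 1) * (A * (F0 * (1 - A - B) - k)) * B
            - (k - 1) * A * ((k - 1) * A - B)) / B ^ 2)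
    = -(1 + B * F0 / (k - 1)) * ((k - 1) * A / B - 1) ^ 2 := by
  have hk1 : k - 1 ≠ 0 := by linarith
  field_simp
  ring

/-- The planar SIR system with recovery-dependent infection rate has no non-constant
periodic solutions lying entirely in the half-plane I > 0. -/
theorem sir_no_nonconstant_periodic_solutions
    (k : ℝ) (hk : 1 < k)
    (f : ℝ → ℝ) (hf_pos : ∀ x, 0 < f x) (hf_smooth : ContDiff ℝ 1 f)
    (I R : ℝ → ℝ)
    (hI : Differentiable ℝ I) (hR : Differentiable ℝ R)
    (hIode : ∀ t, deriv I t = I t * (f (R t) * (1 - I t - R t) - k))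
    (hRode : ∀ t, deriv R t = (k - 1) * I t - R t)
    (T : ℝ) (hT : 0 < T)
    (hperI : ∀ t, I (t + T) = I t) (hperR : ∀ t, R (t + T) = R t)
    (hIpos : ∀ t, 0 < I t) :
    (∀ t, I t = I 0) ∧ (∀ t, R t = R 0) := by
  have hk1 : (0:ℝ) < k - 1 := by linarith
  have hk1' : (k:ℝ) - 1 ≠ 0 := ne_of_gt hk1
  -- derivatives as HasDerivAt
  have hIh : ∀ t, HasDerivAt I (I t * (f (R t) * (1 - I t - R t) - k)) t := by
    intro t
    have := (hI t).hasDerivAt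
    rwa [hIode t] at this
  have hRh : ∀ t, HasDerivAt R ((k - 1) * I t - R t) t := by
    intro t
    have := (hR t).hasDerivAt
    rwa [hRode t] at this
  have hRc : Continuous R := hR.continuous
  have hPR : Function.Periodic R T := hperR
  -- every value of R is attained on [0, T]
  have hval : ∀ t, ∃ s ∈ Set.Icc (0:ℝ) T, R s = R t := by
    intro t
    refine ⟨t - ⌊t / T⌋ * T, ⟨?_, ?_⟩, ?_⟩
    · exact Int.sub_floor_div_mul_nonneg t hT
    · exact le_of_lt (Int.sub_floor_div_mul_lt t hT)
    · exact hPR.sub_int_mul_eq ⌊t / T⌋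
  -- minimum of R
  obtain ⟨t₀, ht₀mem, ht₀min⟩ :=
    (isCompact_Icc (a := (0:ℝ)) (b := T)).exists_isMinOn
      (Set.nonempty_Icc.mpr hT.le) hRc.continuousOn
  have hmin : ∀ t, R t₀ ≤ R t := by
    intro t
    obtain ⟨s, hs, hst⟩ := hval t
    have := ht₀min hs
    simpa [hst] using this
  have hlocmin : IsLocalMin R t₀ := Filter.Eventually.of_forall hmin
  have hd0 : deriv R t₀ = 0 := hlocmin.deriv_eq_zero
  have hmpos : 0 < R t₀ := by
    have h1 := hRode t₀
    rw [hd0] at h1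
    have := mul_pos hk1 (hIpos t₀)
    linarith
  set m : ℝ := R t₀ with hm_def
  have hRpos : ∀ t, 0 < R t := fun t => lt_of_lt_of_le hmpos (hmin t)
  have hRne : ∀ t, R t ≠ 0 := fun t => ne_of_gt (hRpos t)
  -- the antiderivative Ψ
  set g : ℝ → ℝ := fun s =>
    -(f (max s m) * (1 - max s m - max s m / (k - 1)) - k) / max s m with hg_def
  have hmaxc : Continuous fun s : ℝ => max s m := continuous_id.max continuous_const
  have hmaxne : ∀ s : ℝ, max s m ≠ 0 := fun s =>
    ne_of_gt (lt_of_lt_of_le hmpos (le_max_right s m))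
  have hgc : Continuous g := by
    apply Continuous.div
    · exact (((hf_smooth.continuous.comp hmaxc).mul
        ((continuous_const.sub hmaxc).sub (hmaxc.div_const _))).sub continuous_const).neg
    · exact hmaxc
    · exact hmaxne
  set Ψ : ℝ → ℝ := fun r => ∫ s in (0:ℝ)..r, g s with hΨ_def
  have hΨ : ∀ r, HasDerivAt Ψ (g r) r := fun r =>
    (hgc.integral_hasStrictDerivAt 0 r).hasDerivAt
  -- q and V
  set q : ℝ → ℝ := fun t => (k - 1) * I t / R t with hq_def
  have hqpos : ∀ t, 0 < q t := fun t =>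
    div_pos (mul_pos hk1 (hIpos t)) (hRpos t)
  have hqne : ∀ t, q t ≠ 0 := fun t => ne_of_gt (hqpos t)
  set V : ℝ → ℝ := fun t => Ψ (R t) + q t - Real.log (q t) with hV_def
  -- derivative of q
  set E : ℝ → ℝ := fun t =>
    ((k - 1) * (I t * (f (R t) * (1 - I t - R t) - k)) * R t
      - (k - 1) * I t * ((k - 1) * I t - R t)) / R t ^ 2 with hE_def
  have hqh : ∀ t, HasDerivAt q (E t) t := by
    intro t
    exact ((hIh t).const_mul (k - 1)).div (hRh t) (hRne t)
  -- derivative of V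
  have hVh : ∀ t, HasDerivAt V
      (-(1 + R t * f (R t) / (k - 1)) * (q t - 1) ^ 2) t := by
    intro t
    have hΨR : HasDerivAt (fun u => Ψ (R u)) (g (R t) * ((k - 1) * I t - R t)) t :=
      (hΨ (R t)).comp t (hRh t)
    have hlog : HasDerivAt (fun u => Real.log (q u)) ((q t)⁻¹ * E t) t :=
      (Real.hasDerivAt_log (hqne t)).comp t (hqh t)
    have hsum := (hΨR.add (hqh t)).sub hlog
    have hmax : max (R t) m = R t := max_eq_left (hmin t)
    have hgRt : g (R t) = -(f (R t) * (1 - R t - R t / (k - 1)) - k) / R t := by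
      rw [hg_def]; simp only [hmax]
    have hkey := sir_key_identity k (I t) (R t) (f (R t)) hk
      (ne_of_gt (hIpos t)) (hRne t)
    have heq : g (R t) * ((k - 1) * I t - R t) + E t - (q t)⁻¹ * E t
        = -(1 + R t * f (R t) / (k - 1)) * (q t - 1) ^ 2 := by
      rw [hgRt, hE_def, hq_def]
      exact hkey
    rw [heq] at hsum
    exact hsum
  have hVd : Differentiable ℝ V := fun t => (hVh t).differentiableAt
  have hVderiv : ∀ t, deriv V t = -(1 + R t * f (R t) / (k - 1)) * (q t - 1) ^ 2 :=
    fun t => (hVh t).deriv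
  have hVanti : Antitone V := by
    apply antitone_of_deriv_nonpos hVd
    intro t
    rw [hVderiv t]
    have h1 : 0 < 1 + R t * f (R t) / (k - 1) := by
      have := div_pos (mul_pos (hRpos t) (hf_pos (R t))) hk1
      linarith
    have h2 : (0:ℝ) ≤ (q t - 1) ^ 2 := sq_nonneg _
    nlinarith
  -- V is periodic
  have hVper : Function.Periodic V T := by
    intro t
    simp only [hV_def, hq_def, hperI t, hperR t]
  -- V is constant
  have hVconst : ∀ t, V t = V 0 := by
    intro t
    rcases le_total t 0 with h | h
    · obtain ⟨n, hn⟩ := exists_nat_ge (-t / T)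
      have hnt : 0 ≤ t + n * T := by
        have : -t ≤ n * T := by
          rw [div_le_iff₀ hT] at hn
          linarith
        linarith
      have h1 : V (t + n * T) ≤ V 0 := hVanti hnt
      have h2 : V 0 ≤ V t := hVanti h
      have h3 : V (t + n * T) = V t := by
        have := hVper.sub_nat_mul_eq (x := t + n * T) n
        simpa using this.symm
      linarith
    · obtain ⟨n, hn⟩ := exists_nat_ge (t / T)
      have hnt : t ≤ n * T := by
        rw [div_le_iff₀ hT] at hn
        linarith
      have h1 : V (n * T) ≤ V t := hVanti hnt
      have h2 : V t ≤ V 0 := hVanti h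
      have h3 : V ((n:ℝ) * T) = V 0 := by
        have := hVper.sub_nat_mul_eq (x := (n:ℝ) * T) n
        simpa using this.symm
      linarith
  -- hence deriv V = 0 and q ≡ 1
  have hVzero : ∀ t, deriv V t = 0 := by
    have : V = fun _ => V 0 := funext hVconst
    intro t
    rw [this]
    simp
  have hq1 : ∀ t, q t = 1 := by
    intro t
    have h0 := hVzero t
    rw [hVderiv t] at h0
    have h1 : 0 < 1 + R t * f (R t) / (k - 1) := by
      have := div_pos (mul_pos (hRpos t) (hf_pos (R t))) hk1
      linarith
    have h2 : (q t - 1) ^ 2 = 0 := by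
      by_contra hne
      have : (0:ℝ) < (q t - 1) ^ 2 := lt_of_le_of_ne (sq_nonneg _) (Ne.symm hne)
      nlinarith
    have := pow_eq_zero_iff (n := 2) (by norm_num) |>.mp h2
    linarith
  have hRI : ∀ t, (k - 1) * I t = R t := by
    intro t
    have := hq1 t
    rw [hq_def] at this
    have h2 := (div_eq_one_iff_eq (hRne t)).mp this
    linarith
  have hRd0 : ∀ t, deriv R t = 0 := by
    intro t
    rw [hRode t, hRI t]
    ring
  have hRconst : ∀ t, R t = R 0 := fun t => is_const_of_deriv_eq_zero hR hRd0 t 0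
  have hIconst : ∀ t, I t = I 0 := by
    intro t
    have h1 := hRI t
    have h2 := hRI 0
    rw [hRconst t] at h1
    have : (k - 1) * I t = (k - 1) * I 0 := by rw [h1, h2]
    exact mul_left_cancel₀ hk1' this
  exact ⟨hIconst, hRconst⟩
end

section
/- Let k > 1 and let f : ℝ → ℝ be a positive, continuously differentiable function with f(0) < k. Suppose there is no R ∈ (0, (k−1)/k) with f(R) = (k−1)/((k−1)/k − R) (i.e., the system has no endemic equilibrium). Then for every pair of differentiable functions I, R : ℝ → ℝ satisfying, for all t ≥ 0, I'(t) = I(t)·(f(R(t))·(1 − I(t) − R(t)) − k) and R'(t) = (k−1)·I(t) − R(t), with I(0) ≥ 0, R(0) ≥ 0 and I(0) + R(0) ≤ 1, one has (I(t), R(t)) → (0, 0) as t → ∞. -/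
/-!
Without an endemic equilibrium, `f R * ((k - 1) / k - R) < k - 1` for every `R ≥ 0`: it holds at
`R = 0` because `f 0 < k`, it cannot cross the value `k - 1` on `(0, (k - 1) / k)`, and beyond that
the left side is nonpositive. By compactness the inequality holds with a uniform gap `δ > 0`.

Solutions stay in the quadrant `I, R ≥ 0`. There, `V = I * exp (G R)` with `G' = f / (k - 1)` is a
Lyapunov function: the weight cancels the `I²` term of `I' / I`, leaving
`V' = k / (k - 1) * (f R * ((k - 1) / k - R) - (k - 1)) * V ≤ -(k / (k - 1)) * δ * V`.
Hence `V → 0`, so `I → 0` since `0 ≤ I ≤ V`, and then `R → 0` because `R' = (k - 1) I - R`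
is a stable linear equation driven by a vanishing input.
-/

open Filter Real Set Topology

theorem forall_lt_of_forall_ne {φ : ℝ → ℝ} {a b y : ℝ} (hφ : ContinuousOn φ (Icc a b))
    (ha : φ a < y) (hne : ∀ x ∈ Ioo a b, φ x ≠ y) : ∀ x ∈ Ico a b, φ x < y := by
  rintro x ⟨hax, hxb⟩
  by_contra! hy
  obtain ⟨z, ⟨haz, hzx⟩, hz⟩ :=
    intermediate_value_Icc hax (hφ.mono (Icc_subset_Icc_right hxb.le)) ⟨ha.le, hy⟩
  have haz' : a < z := haz.lt_of_ne (by rintro rfl; exact ha.ne hz)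
  exact hne z ⟨haz', hzx.trans_lt hxb⟩ hz

theorem exists_pos_forall_mul_sub_le_of_no_endemic {k : ℝ} {f : ℝ → ℝ} (hk : 1 < k)
    (hf : Continuous f) (hf_nonneg : ∀ x, 0 ≤ f x) (hf0 : f 0 < k)
    (hno : ¬ ∃ R₀ ∈ Ioo (0 : ℝ) ((k - 1) / k), f R₀ = (k - 1) / ((k - 1) / k - R₀)) :
    ∃ δ > 0, ∀ x, 0 ≤ x → f x * ((k - 1) / k - x) ≤ k - 1 - δ := by
  set c := (k - 1) / k
  have hck : c * k = k - 1 := div_mul_cancel₀ _ (by positivity)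
  have hc0 : 0 < c := div_pos (by linarith) (by linarith)
  have hφ : Continuous fun x => f x * (c - x) := by fun_prop
  have hψ : Continuous fun x => k - 1 - f x * (c - x) := by fun_prop
  have hlt : ∀ x ∈ Icc 0 c, f x * (c - x) < k - 1 := by
    rintro x ⟨hx0, hxc⟩
    rcases hxc.lt_or_eq with hxc | rfl
    · refine forall_lt_of_forall_ne hφ.continuousOn ?_ ?_ x ⟨hx0, hxc⟩
      · nlinarith
      · rintro y hy hφy
        exact hno ⟨y, hy, by rw [eq_div_iff (sub_pos.2 hy.2).ne']; exact hφy⟩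
    · simp only [sub_self, mul_zero]; linarith
  obtain ⟨δ, hδ, hδle⟩ := isCompact_Icc.exists_forall_le' hψ.continuousOn
    fun x hx => sub_pos.2 (hlt x hx)
  refine ⟨min δ (k - 1), lt_min hδ (by linarith), fun x hx => ?_⟩
  rcases le_total x c with hxc | hxc
  · linarith [hδle x ⟨hx, hxc⟩, min_le_left δ (k - 1)]
  · have : f x * (c - x) ≤ 0 := mul_nonpos_of_nonneg_of_nonpos (hf_nonneg x) (by linarith)
    linarith [min_le_right δ (k - 1)]

theorem le_mul_exp_sub_of_deriv_le {x a A : ℝ → ℝ} {t₀ : ℝ} (hx : Differentiable ℝ x)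
    (hA : ∀ t, HasDerivAt A (a t) t) (h : ∀ t, t₀ < t → deriv x t ≤ a t * x t) :
    ∀ t, t₀ ≤ t → x t ≤ x t₀ * exp (A t - A t₀) := by
  set y : ℝ → ℝ := fun t => x t * exp (-A t)
  have hy : ∀ t, HasDerivAt y (deriv x t * exp (-A t) + x t * (exp (-A t) * -a t)) t :=
    fun t => (hx t).hasDerivAt.mul (hA t).neg.exp
  have hanti : AntitoneOn y (Ici t₀) := by
    refine antitoneOn_of_deriv_nonpos (convex_Ici t₀)
      (fun t _ => (hy t).continuousAt.continuousWithinAt)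
      (fun t _ => (hy t).differentiableAt.differentiableWithinAt) fun t ht => ?_
    rw [interior_Ici] at ht
    rw [(hy t).deriv]
    nlinarith [h t ht, exp_pos (-A t)]
  intro t ht
  have hyt : y t ≤ y t₀ := hanti self_mem_Ici ht ht
  calc x t = y t * exp (A t) := by simp [y, mul_assoc, ← exp_add]
    _ ≤ y t₀ * exp (A t) := by gcongr
    _ = x t₀ * exp (A t - A t₀) := by simp only [y]; rw [sub_eq_neg_add, exp_add]; ring

theorem mul_exp_sub_le_of_le_deriv {x a A : ℝ → ℝ} {t₀ : ℝ} (hx : Differentiable ℝ x)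
    (hA : ∀ t, HasDerivAt A (a t) t) (h : ∀ t, t₀ < t → a t * x t ≤ deriv x t) :
    ∀ t, t₀ ≤ t → x t₀ * exp (A t - A t₀) ≤ x t := by
  intro t ht
  have := le_mul_exp_sub_of_deriv_le (x := fun s => -x s) hx.neg hA (fun s hs => by
    rw [deriv.fun_neg]; linarith [h s hs]) t ht
  linarith

theorem nonneg_of_mul_le_deriv {x a : ℝ → ℝ} {t₀ : ℝ} (hx : Differentiable ℝ x)
    (ha : Continuous a) (h : ∀ t, t₀ < t → a t * x t ≤ deriv x t) (h₀ : 0 ≤ x t₀) :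
    ∀ t, t₀ ≤ t → 0 ≤ x t := fun t ht =>
  (mul_nonneg h₀ (exp_pos _).le).trans <| mul_exp_sub_le_of_le_deriv hx
    (fun t => intervalIntegral.integral_hasDerivAt_right (ha.intervalIntegrable t₀ t)
      (ha.stronglyMeasurableAtFilter _ _) ha.continuousAt) h t ht

theorem tendsto_zero_of_deriv_le_sub_mul {x g : ℝ → ℝ} {r : ℝ} (hr : 0 < r)
    (hx : Differentiable ℝ x) (hg : Tendsto g atTop (𝓝 0))
    (h : ∀ᶠ t in atTop, deriv x t ≤ g t - r * x t) (hnn : ∀ᶠ t in atTop, 0 ≤ x t) :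
    Tendsto x atTop (𝓝 0) := by
  refine tendsto_order.2 ⟨fun b hb => hnn.mono fun t ht => hb.trans_le ht, fun b hb => ?_⟩
  obtain ⟨T, hT⟩ :=
    eventually_atTop.1 (h.and (hg.eventually (gt_mem_nhds (half_pos (mul_pos hr hb)))))
  -- past `T`, `x - b / 2` is a subsolution of `y' = -r y`
  have hdecay := le_mul_exp_sub_of_deriv_le (x := fun t => x t - b / 2) (A := fun t => -r * t)
    (t₀ := T) (hx.sub_const _) (fun t => by simpa using (hasDerivAt_id t).const_mul (-r))
    (fun t ht => by
      obtain ⟨h1, h2⟩ := hT t ht.le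
      rw [deriv_sub_const]; linarith)
  have hexp : Tendsto (fun t => (x T - b / 2) * exp (-r * t - -r * T)) atTop (𝓝 0) := by
    have : Tendsto (fun t => -r * t - -r * T) atTop atBot :=
      tendsto_atBot_add_const_right _ _ (tendsto_id.const_mul_atTop_of_neg (neg_lt_zero.2 hr))
    simpa using (tendsto_exp_atBot.comp this).const_mul (x T - b / 2)
  filter_upwards [eventually_ge_atTop T, hexp.eventually (gt_mem_nhds (half_pos hb))] with t ht h'
  linarith [hdecay t ht]

namespace SIR

structure IsSolution (k : ℝ) (f I R : ℝ → ℝ) : Prop where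
  differentiable_I : Differentiable ℝ I
  differentiable_R : Differentiable ℝ R
  deriv_I : ∀ t, 0 ≤ t → deriv I t = I t * (f (R t) * (1 - I t - R t) - k)
  deriv_R : ∀ t, 0 ≤ t → deriv R t = (k - 1) * I t - R t

variable {k : ℝ} {f I R : ℝ → ℝ}

theorem IsSolution.infected_nonneg (hs : IsSolution k f I R) (hf : Continuous f)
    (h₀ : 0 ≤ I 0) : ∀ t, 0 ≤ t → 0 ≤ I t := by
  have hIc := hs.differentiable_I.continuous
  have hRc := hs.differentiable_R.continuous
  refine nonneg_of_mul_le_deriv hs.differentiable_I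
    (a := fun t => f (R t) * (1 - I t - R t) - k) (by fun_prop) (fun t ht => ?_) h₀
  rw [hs.deriv_I t ht.le, mul_comm]

theorem IsSolution.recovered_nonneg (hs : IsSolution k f I R) (hk : 1 ≤ k)
    (hI : ∀ t, 0 ≤ t → 0 ≤ I t) (h₀ : 0 ≤ R 0) : ∀ t, 0 ≤ t → 0 ≤ R t :=
  nonneg_of_mul_le_deriv hs.differentiable_R (a := fun _ => -1) continuous_const
    (fun t ht => by rw [hs.deriv_R t ht.le]; nlinarith [hI t ht.le]) h₀

noncomputable def lyapunov (k : ℝ) (f I R : ℝ → ℝ) (t : ℝ) : ℝ :=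
  I t * exp ((k - 1)⁻¹ * ∫ s in (0 : ℝ)..R t, f s)

theorem hasDerivAt_lyapunov (hf : Continuous f) (hI : Differentiable ℝ I)
    (hR : Differentiable ℝ R) (t : ℝ) :
    HasDerivAt (lyapunov k f I R) (deriv I t * exp ((k - 1)⁻¹ * ∫ s in (0 : ℝ)..R t, f s) +
      I t * (exp ((k - 1)⁻¹ * ∫ s in (0 : ℝ)..R t, f s) *
        ((k - 1)⁻¹ * (f (R t) * deriv R t)))) t := by
  have hG : HasDerivAt (fun y => ∫ s in (0 : ℝ)..y, f s) (f (R t)) (R t) :=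
    intervalIntegral.integral_hasDerivAt_right (hf.intervalIntegrable _ _)
      (hf.stronglyMeasurableAtFilter _ _) hf.continuousAt
  exact (hI t).hasDerivAt.mul ((hG.comp t (hR t).hasDerivAt).const_mul _).exp

theorem IsSolution.deriv_lyapunov (hs : IsSolution k f I R) (hf : Continuous f) (hk : 1 < k)
    {t : ℝ} (ht : 0 ≤ t) : deriv (lyapunov k f I R) t =
      k / (k - 1) * (f (R t) * ((k - 1) / k - R t) - (k - 1)) * lyapunov k f I R t := by
  rw [(hasDerivAt_lyapunov hf hs.differentiable_I hs.differentiable_R t).deriv,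
    hs.deriv_I t ht, hs.deriv_R t ht, lyapunov]
  have : k - 1 ≠ 0 := by linarith
  field_simp
  ring

theorem le_lyapunov (hk : 1 < k) (hf : ∀ x, 0 ≤ f x) {t : ℝ} (hI : 0 ≤ I t)
    (hR : 0 ≤ R t) : I t ≤ lyapunov k f I R t :=
  le_mul_of_one_le_right hI <| one_le_exp <| mul_nonneg (inv_nonneg.2 (by linarith)) <|
    intervalIntegral.integral_nonneg hR fun s _ => hf s

theorem IsSolution.tendsto_lyapunov (hs : IsSolution k f I R) (hf : Continuous f) (hk : 1 < k)
    (hI : ∀ t, 0 ≤ t → 0 ≤ I t) (hR : ∀ t, 0 ≤ t → 0 ≤ R t) {δ : ℝ}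
    (hδ : 0 < δ) (hgap : ∀ x, 0 ≤ x → f x * ((k - 1) / k - x) ≤ k - 1 - δ) :
    Tendsto (lyapunov k f I R) atTop (𝓝 0) := by
  have hV : ∀ t, 0 ≤ t → 0 ≤ lyapunov k f I R t := fun t ht =>
    mul_nonneg (hI t ht) (exp_pos _).le
  refine tendsto_zero_of_deriv_le_sub_mul (g := 0) (r := k / (k - 1) * δ) (by positivity)
    (fun t => (hasDerivAt_lyapunov hf hs.differentiable_I hs.differentiable_R t).differentiableAt)
    tendsto_const_nhds ?_ ((eventually_ge_atTop 0).mono hV)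
  filter_upwards [eventually_ge_atTop 0] with t ht
  rw [hs.deriv_lyapunov hf hk ht, Pi.zero_apply, zero_sub, ← neg_mul, ← mul_neg]
  gcongr
  · exact hV t ht
  · linarith [hgap _ (hR t ht)]

end SIR

theorem sir_disease_free_globally_stable_general
    (k : ℝ) (hk : 1 < k)
    (f : ℝ → ℝ) (hf_pos : ∀ x, 0 < f x) (hf_smooth : ContDiff ℝ 1 f)
    (hf0 : f 0 < k)
    (hno_endemic : ¬ ∃ R₀ ∈ Set.Ioo (0 : ℝ) ((k - 1) / k),
      f R₀ = (k - 1) / ((k - 1) / k - R₀))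
    (I R : ℝ → ℝ)
    (hI : Differentiable ℝ I) (hR : Differentiable ℝ R)
    (hIode : ∀ t, 0 ≤ t → deriv I t = I t * (f (R t) * (1 - I t - R t) - k))
    (hRode : ∀ t, 0 ≤ t → deriv R t = (k - 1) * I t - R t)
    (hI0 : 0 ≤ I 0) (hR0 : 0 ≤ R 0) :
    Filter.Tendsto (fun t => (I t, R t)) Filter.atTop (nhds (0, 0)) := by
  have hs : SIR.IsSolution k f I R := ⟨hI, hR, hIode, hRode⟩
  have hf := hf_smooth.continuous
  have hf_nonneg x := (hf_pos x).le
  obtain ⟨δ, hδ, hgap⟩ :=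
    exists_pos_forall_mul_sub_le_of_no_endemic hk hf hf_nonneg hf0 hno_endemic
  have hInn := hs.infected_nonneg hf hI0
  have hRnn := hs.recovered_nonneg hk.le hInn hR0
  have hIlim : Tendsto I atTop (𝓝 0) :=
    tendsto_of_tendsto_of_tendsto_of_le_of_le' tendsto_const_nhds
      (hs.tendsto_lyapunov hf hk hInn hRnn hδ hgap) ((eventually_ge_atTop 0).mono hInn)
      ((eventually_ge_atTop 0).mono fun t ht =>
        SIR.le_lyapunov hk hf_nonneg (hInn t ht) (hRnn t ht))
  have hRlim : Tendsto R atTop (𝓝 0) :=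
    tendsto_zero_of_deriv_le_sub_mul one_pos hR (by simpa using hIlim.const_mul (k - 1))
      ((eventually_ge_atTop 0).mono fun t ht => by rw [hRode t ht, one_mul])
      ((eventually_ge_atTop 0).mono hRnn)
  exact hIlim.prodMk_nhds hRlim

/-- If f(0) < k and there is no endemic equilibrium, then the disease-free
equilibrium (0,0) is globally stable. -/
theorem sir_disease_free_globally_stable
    (k : ℝ) (hk : 1 < k)
    (f : ℝ → ℝ) (hf_pos : ∀ x, 0 < f x) (hf_smooth : ContDiff ℝ 1 f)
    (hf0 : f 0 < k)
    (hno_endemic : ¬ ∃ R₀ ∈ Set.Ioo (0 : ℝ) ((k - 1) / k),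
      f R₀ = (k - 1) / ((k - 1) / k - R₀))
    (I R : ℝ → ℝ)
    (hI : Differentiable ℝ I) (hR : Differentiable ℝ R)
    (hIode : ∀ t, 0 ≤ t → deriv I t = I t * (f (R t) * (1 - I t - R t) - k))
    (hRode : ∀ t, 0 ≤ t → deriv R t = (k - 1) * I t - R t)
    (hI0 : 0 ≤ I 0) (hR0 : 0 ≤ R 0) (hsum : I 0 + R 0 ≤ 1) :
    Filter.Tendsto (fun t => (I t, R t)) Filter.atTop (nhds (0, 0)) :=
  sir_disease_free_globally_stable_general k hk f hf_pos hf_smooth hf0 hno_endemic I R hI hR hIode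
    hRode hI0 hR0
end

section
/- Let k > 1 and let f : ℝ → ℝ be a positive function. For real numbers I* and R* with I* > 0, the pair (I*, R*) satisfies f(R*)·(1 − I* − R*) − k = 0 and (k−1)·I* − R* = 0 if and only if R* ∈ (0, (k−1)/k), I* ∈ (0, 1/k), I* = R*/(k−1), and f(R*) = (k−1)/((k−1)/k − R*). -/
/-!
On the recovery nullcline `R = (k - 1) I` one has
`1 - I - R = k / (k - 1) * ((k - 1) / k - R)`, so the infection balance
`f R * (1 - I - R) = k` becomes `f R * ((k - 1) / k - R) = k - 1`. As `f R` and `k - 1` are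
positive, this forces `R < (k - 1) / k` and solves to `f R = g R`.
-/

namespace SIR

section Field

variable {K : Type*} [Field K] {k I R : K}

theorem one_sub_sub_eq_of_eq_mul (hk0 : k ≠ 0) (hk1 : k - 1 ≠ 0) (hR : R = (k - 1) * I) :
    1 - I - R = k / (k - 1) * ((k - 1) / k - R) := by
  subst hR
  field_simp
  ring

theorem mul_one_sub_sub_eq_iff (hk0 : k ≠ 0) (hk1 : k - 1 ≠ 0) (hR : R = (k - 1) * I) (a : K) :
    a * (1 - I - R) = k ↔ a * ((k - 1) / k - R) = k - 1 := by
  rw [one_sub_sub_eq_of_eq_mul hk0 hk1 hR, mul_left_comm, div_mul_eq_mul_div, div_eq_iff hk1,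
    mul_right_inj' hk0]

end Field

section OrderedField

variable {K : Type*} [Field K] [LinearOrder K] [IsStrictOrderedRing K]

theorem mul_eq_iff_pos_and_eq_div {a d c : K} (ha : 0 < a) (hc : 0 < c) :
    a * d = c ↔ 0 < d ∧ a = c / d := by
  constructor
  · intro h
    have hd : 0 < d := pos_of_mul_pos_right (h ▸ hc) ha.le
    exact ⟨hd, (eq_div_iff hd.ne').2 h⟩
  · rintro ⟨hd, rfl⟩
    exact div_mul_cancel₀ c hd.ne'

theorem div_sub_one_mem_Ioo {k R : K} (hk : 1 < k) (hR : R ∈ Set.Ioo 0 ((k - 1) / k)) :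
    R / (k - 1) ∈ Set.Ioo 0 (1 / k) := by
  have hk1 : 0 < k - 1 := sub_pos.2 hk
  refine ⟨div_pos hR.1 hk1, ?_⟩
  rw [div_lt_iff₀ hk1, one_div_mul_eq_div]
  exact hR.2

end OrderedField

end SIR

/-- Characterization of endemic equilibria: a pair (I*, R*) with I* > 0 is an
endemic equilibrium iff R* ∈ (0, (k−1)/k), I* ∈ (0, 1/k), I* = R*/(k−1) and
f(R*) = g(R*) where g(R) = (k−1)/((k−1)/k − R). -/
theorem sir_endemic_equilibrium_characterization
    (k : ℝ) (hk : 1 < k)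
    (f : ℝ → ℝ) (hf_pos : ∀ x, 0 < f x)
    (Istar Rstar : ℝ) (hIstar : 0 < Istar) :
    (f Rstar * (1 - Istar - Rstar) - k = 0 ∧ (k - 1) * Istar - Rstar = 0) ↔
    (Rstar ∈ Set.Ioo 0 ((k - 1) / k) ∧ Istar ∈ Set.Ioo 0 (1 / k) ∧
      Istar = Rstar / (k - 1) ∧
      f Rstar = (k - 1) / ((k - 1) / k - Rstar)) := by
  have hk0 : k ≠ 0 := by positivity
  have hk1 : 0 < k - 1 := sub_pos.2 hk
  have hsolve :=
    SIR.mul_eq_iff_pos_and_eq_div (d := (k - 1) / k - Rstar) (hf_pos Rstar) hk1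
  constructor
  · rintro ⟨hinf, hrec⟩
    have hR : Rstar = (k - 1) * Istar := by linarith
    have hI : Istar = Rstar / (k - 1) := by rw [hR, mul_div_cancel_left₀ _ hk1.ne']
    obtain ⟨hRlt, hfg⟩ :=
      hsolve.1 ((SIR.mul_one_sub_sub_eq_iff hk0 hk1.ne' hR _).1 (by linarith))
    have hRmem : Rstar ∈ Set.Ioo 0 ((k - 1) / k) := ⟨hR ▸ by positivity, by linarith⟩
    exact ⟨hRmem, hI ▸ SIR.div_sub_one_mem_Ioo hk hRmem, hI, hfg⟩
  · rintro ⟨hRmem, -, hI, hfg⟩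
    have hR : Rstar = (k - 1) * Istar := by rw [hI, mul_div_cancel₀ _ hk1.ne']
    have hinf :=
      (SIR.mul_one_sub_sub_eq_iff hk0 hk1.ne' hR _).2 (hsolve.2 ⟨by linarith [hRmem.2], hfg⟩)
    constructor <;> linarith
end

section
/- Let k > 1 and let f : ℝ → ℝ be a positive function that is continuous on [0, 1]. If there exists R₀ ∈ [0, (k−1)/k) with f(R₀) > (k−1)/((k−1)/k − R₀), then there exists R* ∈ (R₀, (k−1)/k) with f(R*) = (k−1)/((k−1)/k − R*); consequently, setting I* = R*/(k−1), the pair (I*, R*) is an endemic equilibrium with I* ∈ (R₀/(k−1), 1/k). -/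
open Set

theorem exists_mem_Ioo_eq_div_sub {f : ℝ → ℝ} {a b c : ℝ} (hab : a < b)
    (hf : ContinuousOn f (Icc a b)) (hc : 0 < c) (ha : c / (b - a) < f a) :
    ∃ x ∈ Ioo a b, f x = c / (b - x) := by
  -- Clearing the pole, `x ↦ f x * (b - x)` exceeds `c` at `a` and vanishes at `b`.
  have hcont : ContinuousOn (fun x => f x * (b - x)) (Icc a b) := hf.mul (by fun_prop)
  have hstart : c < f a * (b - a) := (div_lt_iff₀ (sub_pos.2 hab)).1 ha
  have hend : f b * (b - b) < c := by simpa using hc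
  obtain ⟨x, hx, hfx⟩ := intermediate_value_Ioo' hab.le hcont ⟨hend, hstart⟩
  exact ⟨x, hx, (eq_div_iff (sub_pos.2 hx.2).ne').2 hfx⟩

theorem sir_endemic_identity {f : ℝ → ℝ} {k R : ℝ} (hk : 1 < k) (hR : R < (k - 1) / k)
    (hfR : f R = (k - 1) / ((k - 1) / k - R)) :
    f R * (1 - R / (k - 1) - R) - k = 0 := by
  have hk1 : k - 1 ≠ 0 := (sub_pos.2 hk).ne'
  have hgap : (k - 1) / k - R ≠ 0 := (sub_pos.2 hR).ne'
  have hfactor : 1 - R / (k - 1) - R = k / (k - 1) * ((k - 1) / k - R) := by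
    field_simp
    ring
  rw [hfR, hfactor, sub_eq_zero]
  generalize (k - 1) / k - R = g at hgap
  field_simp

theorem sir_endemic_equilibrium_existence_general
    (k : ℝ) (hk : 1 < k)
    (f : ℝ → ℝ) (hf_cont : ContinuousOn f (Set.Icc 0 1))
    (R₀ : ℝ) (hR₀ : R₀ ∈ Set.Ico 0 ((k - 1) / k))
    (hfg : f R₀ > (k - 1) / ((k - 1) / k - R₀)) :
    ∃ Rstar ∈ Set.Ioo R₀ ((k - 1) / k),
      f Rstar = (k - 1) / ((k - 1) / k - Rstar) ∧
      Rstar / (k - 1) ∈ Set.Ioo (R₀ / (k - 1)) (1 / k) ∧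
      0 < Rstar / (k - 1) ∧
      f Rstar * (1 - Rstar / (k - 1) - Rstar) - k = 0 ∧
      (k - 1) * (Rstar / (k - 1)) - Rstar = 0 := by
  have hk0 : 0 < k := by linarith
  have hk1 : 0 < k - 1 := sub_pos.2 hk
  have hb1 : (k - 1) / k ≤ 1 := (div_le_one hk0).2 (by linarith)
  have hcont : ContinuousOn f (Icc R₀ ((k - 1) / k)) := hf_cont.mono (Icc_subset_Icc hR₀.1 hb1)
  obtain ⟨R, hR, hfR⟩ := exists_mem_Ioo_eq_div_sub hR₀.2 hcont hk1 hfg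
  have hI_lt : R / (k - 1) < 1 / k := by
    rw [div_lt_div_iff₀ hk1 hk0]
    linarith [(lt_div_iff₀ hk0).1 hR.2]
  refine ⟨R, hR, hfR, ⟨div_lt_div_of_pos_right hR.1 hk1, hI_lt⟩,
    div_pos (hR₀.1.trans_lt hR.1) hk1, sir_endemic_identity hk hR.2 hfR, ?_⟩
  rw [mul_div_cancel₀ R hk1.ne', sub_self]

/-- If f(R₀) > g(R₀) for some R₀ ∈ [0, (k−1)/k), then there is an endemic
equilibrium (I*, R*) with R* ∈ (R₀, (k−1)/k) and I* = R*/(k−1) ∈ (R₀/(k−1), 1/k). -/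
theorem sir_endemic_equilibrium_existence
    (k : ℝ) (hk : 1 < k)
    (f : ℝ → ℝ) (hf_pos : ∀ x, 0 < f x) (hf_cont : ContinuousOn f (Set.Icc 0 1))
    (R₀ : ℝ) (hR₀ : R₀ ∈ Set.Ico 0 ((k - 1) / k))
    (hfg : f R₀ > (k - 1) / ((k - 1) / k - R₀)) :
    ∃ Rstar ∈ Set.Ioo R₀ ((k - 1) / k),
      f Rstar = (k - 1) / ((k - 1) / k - Rstar) ∧
      Rstar / (k - 1) ∈ Set.Ioo (R₀ / (k - 1)) (1 / k) ∧
      0 < Rstar / (k - 1) ∧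
      f Rstar * (1 - Rstar / (k - 1) - Rstar) - k = 0 ∧
      (k - 1) * (Rstar / (k - 1)) - Rstar = 0 :=
  sir_endemic_equilibrium_existence_general k hk f hf_cont R₀ hR₀ hfg
end

section
/- Let k > 1 and let f : ℝ → ℝ be a positive function that is continuous on [0, 1] with f(0) > k. Then there exists R* ∈ (0, (k−1)/k) with f(R*) = (k−1)/((k−1)/k − R*), i.e., the system admits at least one endemic equilibrium, namely (R*/(k−1), R*). -/
/-!
Multiplying the equilibrium equation by `(k - 1) / k - R` removes its pole: the continuous function
`f R * ((k - 1) / k - R)` exceeds `k - 1` at `R = 0` because `f 0 > k`, and vanishes at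
`R = (k - 1) / k`, so the intermediate value theorem yields `R*` where it equals `k - 1`.
-/

open Set

theorem exists_mem_Ioo_mul_sub_eq {f : ℝ → ℝ} {a b c : ℝ} (hab : a ≤ b)
    (hf : ContinuousOn f (Icc a b)) (hc : 0 < c) (ha : c < f a * (b - a)) :
    ∃ x ∈ Ioo a b, f x * (b - x) = c := by
  have hcont : ContinuousOn (fun x => f x * (b - x)) (Icc a b) :=
    hf.mul (continuousOn_const.sub continuousOn_id)
  have hc_mem : c ∈ Ioo (f b * (b - b)) (f a * (b - a)) := by
    rw [sub_self, mul_zero]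
    exact ⟨hc, ha⟩
  exact intermediate_value_Ioo' hab hcont hc_mem

theorem one_sub_div_sub_eq_mul_sub {k : ℝ} (hk : k ≠ 0) (hk1 : k - 1 ≠ 0) (R : ℝ) :
    1 - R / (k - 1) - R = k / (k - 1) * ((k - 1) / k - R) := by
  field_simp
  ring

theorem sir_endemic_equilibrium_existence_of_f0_gt_k_general
    (k : ℝ) (hk : 1 < k)
    (f : ℝ → ℝ) (hf_cont : ContinuousOn f (Set.Icc 0 1))
    (hf0 : k < f 0) :
    ∃ Rstar ∈ Set.Ioo (0 : ℝ) ((k - 1) / k),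
      f Rstar = (k - 1) / ((k - 1) / k - Rstar) ∧
      0 < Rstar / (k - 1) ∧
      f Rstar * (1 - Rstar / (k - 1) - Rstar) - k = 0 ∧
      (k - 1) * (Rstar / (k - 1)) - Rstar = 0 := by
  have hk0 : 0 < k := by linarith
  have hk1 : 0 < k - 1 := by linarith
  have hb0 : 0 < (k - 1) / k := div_pos hk1 hk0
  have hb1 : (k - 1) / k ≤ 1 := (div_le_one hk0).2 (by linarith)
  have hf0' : k - 1 < f 0 * ((k - 1) / k - 0) := by
    calc k - 1 = k * ((k - 1) / k) := by field_simp
      _ < f 0 * ((k - 1) / k - 0) := by rw [sub_zero]; exact mul_lt_mul_of_pos_right hf0 hb0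
  obtain ⟨R, hR, hfR⟩ := exists_mem_Ioo_mul_sub_eq hb0.le
    (hf_cont.mono (Icc_subset_Icc le_rfl hb1)) hk1 hf0'
  refine ⟨R, hR, ?_, div_pos hR.1 hk1, ?_, by field_simp; ring⟩
  · rw [eq_div_iff (sub_pos.2 hR.2).ne', hfR]
  · rw [one_sub_div_sub_eq_mul_sub hk0.ne' hk1.ne', mul_left_comm, hfR,
      div_mul_cancel₀ _ hk1.ne', sub_self]

/-- If f(0) > k then the system admits at least one endemic equilibrium
(R*/(k−1), R*) with R* ∈ (0, (k−1)/k). -/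
theorem sir_endemic_equilibrium_existence_of_f0_gt_k
    (k : ℝ) (hk : 1 < k)
    (f : ℝ → ℝ) (hf_pos : ∀ x, 0 < f x) (hf_cont : ContinuousOn f (Set.Icc 0 1))
    (hf0 : k < f 0) :
    ∃ Rstar ∈ Set.Ioo (0 : ℝ) ((k - 1) / k),
      f Rstar = (k - 1) / ((k - 1) / k - Rstar) ∧
      0 < Rstar / (k - 1) ∧
      f Rstar * (1 - Rstar / (k - 1) - Rstar) - k = 0 ∧
      (k - 1) * (Rstar / (k - 1)) - Rstar = 0 :=
  sir_endemic_equilibrium_existence_of_f0_gt_k_general k hk f hf_cont hf0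
end

section
/- Let k > 1, let f : ℝ → ℝ be a positive function differentiable on [0, 1], and let (I*, R*) be an endemic equilibrium, i.e., I* > 0, f(R*)·(1 − I* − R*) = k and (k−1)·I* = R*. If f'(R*) < f(R*)²/(k−1), then the Jacobian matrix J(I*, R*) = [[−I*·f(R*), I*·(f'(R*)·k/f(R*) − f(R*))], [k−1, −1]] has negative trace and positive determinant; consequently every complex eigenvalue of J(I*, R*) has negative real part. -/
open Polynomial Matrix

lemma charpoly_eval_fin_two (M : Matrix (Fin 2) (Fin 2) ℂ) (μ : ℂ) :
    eval μ M.charpoly = (μ - M 0 0) * (μ - M 1 1) - M 0 1 * M 1 0 := by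
  rw [Matrix.charpoly, Matrix.det_fin_two, charmatrix_apply_eq, charmatrix_apply_eq,
    charmatrix_apply_ne _ _ _ (by decide), charmatrix_apply_ne _ _ _ (by decide)]
  simp [mul_comm]

/-- If f'(R*) < f(R*)²/(k−1) at an endemic equilibrium, then the Jacobian has
negative trace and positive determinant, so every complex eigenvalue has
negative real part (local stability via Routh–Hurwitz). -/
theorem sir_endemic_equilibrium_locally_stable
    (k : ℝ) (hk : 1 < k)
    (f : ℝ → ℝ) (hf_pos : ∀ x, 0 < f x)
    (hf_diff : DifferentiableOn ℝ f (Set.Icc 0 1))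
    (Istar Rstar : ℝ) (hIstar : 0 < Istar)
    (heq1 : f Rstar * (1 - Istar - Rstar) = k)
    (heq2 : (k - 1) * Istar = Rstar)
    (hderiv : deriv f Rstar < (f Rstar) ^ 2 / (k - 1))
    (J : Matrix (Fin 2) (Fin 2) ℝ)
    (hJ : J = !![-Istar * f Rstar, Istar * (deriv f Rstar * k / f Rstar - f Rstar);
                 k - 1, -1]) :
    J.trace < 0 ∧ 0 < J.det ∧
    ∀ μ : ℂ, (J.map Complex.ofReal).charpoly.IsRoot μ → μ.re < 0 := by
  have hfR : 0 < f Rstar := hf_pos Rstar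
  have hk1 : 0 < k - 1 := by linarith
  have hkpos : 0 < k := by linarith
  have hd' : (k - 1) * deriv f Rstar < (f Rstar) ^ 2 := by
    have h := (lt_div_iff₀ hk1).mp hderiv
    nlinarith [h]
  have htrace : J.trace < 0 := by
    rw [hJ, Matrix.trace_fin_two_of]
    nlinarith
  have hdet : 0 < J.det := by
    rw [hJ, Matrix.det_fin_two_of]
    have key : -Istar * f Rstar * -1 -
        Istar * (deriv f Rstar * k / f Rstar - f Rstar) * (k - 1)
        = Istar * k / f Rstar * ((f Rstar) ^ 2 - (k - 1) * deriv f Rstar) := by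
      field_simp
      ring
    rw [key]
    apply mul_pos (by positivity) (by linarith)
  refine ⟨htrace, hdet, ?_⟩
  intro μ hroot
  rw [Polynomial.IsRoot, charpoly_eval_fin_two] at hroot
  have e00 : (J.map Complex.ofReal) 0 0 = (J 0 0 : ℂ) := rfl
  have e01 : (J.map Complex.ofReal) 0 1 = (J 0 1 : ℂ) := rfl
  have e10 : (J.map Complex.ofReal) 1 0 = (J 1 0 : ℂ) := rfl
  have e11 : (J.map Complex.ofReal) 1 1 = (J 1 1 : ℂ) := rfl
  rw [e00, e01, e10, e11] at hroot
  -- translate to t = trace, d = det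
  set a := J 0 0
  set b := J 0 1
  set c := J 1 0
  set d := J 1 1
  have ht : a + d < 0 := by have := htrace; rwa [Matrix.trace_fin_two] at this
  have hD : 0 < a * d - b * c := by
    have := hdet; rwa [Matrix.det_fin_two] at this
  -- split into real and imaginary parts
  obtain ⟨x, y, rfl⟩ : ∃ x y : ℝ, μ = Complex.mk x y := ⟨μ.re, μ.im, rfl⟩
  have hre := congrArg Complex.re hroot
  have him := congrArg Complex.im hroot
  simp [Complex.ext_iff, Complex.sub_re, Complex.sub_im, Complex.mul_re,
    Complex.mul_im, Complex.ofReal_re, Complex.ofReal_im] at hre him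
  -- hre : (x - a)*(x - d) - y*y - b*c = 0 type equation
  show x < 0
  rcases eq_or_ne y 0 with hy | hy
  · subst hy
    simp at hre
    -- (x - a) * (x - d) = b * c
    by_contra hx
    push_neg at hx
    nlinarith [sq_nonneg x, sq_nonneg (x - a), sq_nonneg (x - d)]
  · -- imaginary part: (x - a) * y + (x - d) * y = 0 ⇒ 2x = a + d
    have h0 : y * (x + x - (a + d)) = 0 := by
      linear_combination him
    have := (mul_eq_zero.mp h0).resolve_left hy
    linarith
end

section
/- Let k > 1, let f : ℝ → ℝ be a positive function differentiable on [0, 1], and let (I*, R*) be an endemic equilibrium, i.e., I* > 0, f(R*)·(1 − I* − R*) = k and (k−1)·I* = R*. If f'(R*) > f(R*)²/(k−1), then the Jacobian matrix J(I*, R*) = [[−I*·f(R*), I*·(f'(R*)·k/f(R*) − f(R*))], [k−1, −1]] has negative determinant; consequently J(I*, R*) has two real eigenvalues λ₁, λ₂ with λ₁ < 0 < λ₂. -/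
open Polynomial in
lemma my_charpoly_fin_two (M : Matrix (Fin 2) (Fin 2) ℝ) :
    M.charpoly = X ^ 2 - C M.trace * X + C M.det := by
  rw [Matrix.charpoly, Matrix.det_fin_two, Matrix.charmatrix_apply_eq,
    Matrix.charmatrix_apply_eq, Matrix.charmatrix_apply_ne _ _ _ (by decide),
    Matrix.charmatrix_apply_ne _ _ _ (by decide), Matrix.trace_fin_two, Matrix.det_fin_two]
  simp only [map_add, map_mul, map_sub]
  ring


/-- If f'(R*) > f(R*)²/(k−1) at an endemic equilibrium, then the Jacobian has
negative determinant, hence one negative and one positive real eigenvalue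
(the equilibrium is a saddle point). -/
theorem sir_endemic_equilibrium_saddle
    (k : ℝ) (hk : 1 < k)
    (f : ℝ → ℝ) (hf_pos : ∀ x, 0 < f x)
    (hf_diff : DifferentiableOn ℝ f (Set.Icc 0 1))
    (Istar Rstar : ℝ) (hIstar : 0 < Istar)
    (heq1 : f Rstar * (1 - Istar - Rstar) = k)
    (heq2 : (k - 1) * Istar = Rstar)
    (hderiv : (f Rstar) ^ 2 / (k - 1) < deriv f Rstar)
    (J : Matrix (Fin 2) (Fin 2) ℝ)
    (hJ : J = !![-Istar * f Rstar, Istar * (deriv f Rstar * k / f Rstar - f Rstar);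
                 k - 1, -1]) :
    J.det < 0 ∧
    ∃ lam₁ lam₂ : ℝ, J.charpoly.IsRoot lam₁ ∧ J.charpoly.IsRoot lam₂ ∧
      lam₁ < 0 ∧ 0 < lam₂ := by
  have hf : 0 < f Rstar := hf_pos Rstar
  have hk1 : 0 < k - 1 := by linarith
  have h1 : (f Rstar) ^ 2 < deriv f Rstar * (k - 1) := (div_lt_iff₀ hk1).mp hderiv
  have hq : deriv f Rstar * k / f Rstar * f Rstar = deriv f Rstar * k :=
    div_mul_cancel₀ _ (ne_of_gt hf)
  have hdet : J.det < 0 := by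
    rw [hJ, Matrix.det_fin_two_of]
    have hk0 : 0 < k := by linarith
    nlinarith [mul_pos hIstar hf, mul_pos hk0 hk1, mul_pos hIstar hk0]
  refine ⟨hdet, ?_⟩
  set a := J.trace with ha
  set d := J.det with hd
  have hD : 0 < a ^ 2 - 4 * d := by nlinarith [sq_nonneg a]
  set s := Real.sqrt (a ^ 2 - 4 * d) with hs
  have hs0 : 0 ≤ s := Real.sqrt_nonneg _
  have hs2 : s ^ 2 = a ^ 2 - 4 * d := Real.sq_sqrt hD.le
  have hroot : ∀ lam : ℝ, lam ^ 2 - a * lam + d = 0 → J.charpoly.IsRoot lam := by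
    intro lam h
    rw [my_charpoly_fin_two]
    simp only [Polynomial.IsRoot, Polynomial.eval_add, Polynomial.eval_sub,
      Polynomial.eval_mul, Polynomial.eval_pow, Polynomial.eval_X, Polynomial.eval_C]
    linarith [h]
  refine ⟨(a - s) / 2, (a + s) / 2, hroot _ (by nlinarith), hroot _ (by nlinarith), ?_, ?_⟩
  · nlinarith
  · nlinarith
end

section
/- Let k > 1, let f : ℝ → ℝ be a positive function differentiable on [0, 1], and let (I*, R*) be an endemic equilibrium, i.e., I* > 0, f(R*)·(1 − I* − R*) = k and (k−1)·I* = R*. If f'(R*) ≤ 0, then f'(R*) < f(R*)²/(k−1), and hence every complex eigenvalue of the Jacobian matrix J(I*, R*) = [[−I*·f(R*), I*·(f'(R*)·k/f(R*) − f(R*))], [k−1, −1]] has negative real part. -/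
open Polynomial in
lemma root_quad (M : Matrix (Fin 2) (Fin 2) ℂ) (μ : ℂ) (h : M.charpoly.IsRoot μ) :
    μ^2 - M.trace * μ + M.det = 0 := by
  have hcp : M.charpoly = (X - C (M 0 0)) * (X - C (M 1 1)) - (-C (M 0 1)) * (-C (M 1 0)) := by
    rw [Matrix.charpoly, Matrix.det_fin_two]
    simp [Matrix.charmatrix_apply_eq, Matrix.charmatrix_apply_ne]
  rw [Polynomial.IsRoot, hcp] at h
  simp only [Polynomial.eval_sub, Polynomial.eval_mul, Polynomial.eval_neg, Polynomial.eval_X,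
    Polynomial.eval_C] at h
  rw [Matrix.trace_fin_two, Matrix.det_fin_two]
  linear_combination h

lemma quad_root_neg_re (t d : ℝ) (ht : t < 0) (hd : 0 < d) (μ : ℂ)
    (h : μ^2 - (t:ℂ) * μ + (d:ℂ) = 0) : μ.re < 0 := by
  set x := μ.re; set y := μ.im
  have hre : x^2 - y^2 - t*x + d = 0 := by
    have := congrArg Complex.re h
    simpa [pow_two, Complex.mul_re, Complex.mul_im, x, y] using this
  have him : 2*x*y - t*y = 0 := by
    have := congrArg Complex.im h
    simp [pow_two, Complex.mul_re, Complex.mul_im, x, y] at this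
    linarith
  by_contra hx
  push_neg at hx
  rcases eq_or_ne y 0 with hy | hy
  · rw [hy] at hre
    nlinarith
  · have hy2 : 0 < y^2 := by positivity
    have : y * (2*x - t) = 0 := by linarith [him]
    rcases mul_eq_zero.mp this with h1 | h1
    · exact hy h1
    · nlinarith

/-- If f'(R*) ≤ 0 at an endemic equilibrium, then f'(R*) < f(R*)²/(k−1), and so
every complex eigenvalue of the Jacobian has negative real part. -/
theorem sir_endemic_equilibrium_stable_of_nonincreasing
    (k : ℝ) (hk : 1 < k)
    (f : ℝ → ℝ) (hf_pos : ∀ x, 0 < f x)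
    (hf_diff : DifferentiableOn ℝ f (Set.Icc 0 1))
    (Istar Rstar : ℝ) (hIstar : 0 < Istar)
    (heq1 : f Rstar * (1 - Istar - Rstar) = k)
    (heq2 : (k - 1) * Istar = Rstar)
    (hderiv : deriv f Rstar ≤ 0)
    (J : Matrix (Fin 2) (Fin 2) ℝ)
    (hJ : J = !![-Istar * f Rstar, Istar * (deriv f Rstar * k / f Rstar - f Rstar);
                 k - 1, -1]) :
    deriv f Rstar < (f Rstar) ^ 2 / (k - 1) ∧
    ∀ μ : ℂ, (J.map Complex.ofReal).charpoly.IsRoot μ → μ.re < 0 := by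
  have hfR := hf_pos Rstar
  have hk1 : 0 < k - 1 := by linarith
  constructor
  · have : 0 < (f Rstar)^2 / (k-1) := by positivity
    linarith
  · intro μ hroot
    have hq := root_quad _ μ hroot
    have htr : (J.map Complex.ofReal).trace = ((J.trace : ℝ) : ℂ) := by
      rw [Matrix.trace_fin_two, Matrix.trace_fin_two]
      simp [Matrix.map_apply]
    have hdet : (J.map Complex.ofReal).det = ((J.det : ℝ) : ℂ) := by
      rw [Matrix.det_fin_two, Matrix.det_fin_two]
      simp [Matrix.map_apply]
    rw [htr, hdet] at hq
    apply quad_root_neg_re (J.trace) (J.det) _ _ μ hq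
    · rw [hJ, Matrix.trace_fin_two_of]
      nlinarith
    · rw [hJ, Matrix.det_fin_two_of]
      have hdivle : deriv f Rstar * k / f Rstar ≤ 0 := by
        apply div_nonpos_of_nonpos_of_nonneg
        · nlinarith
        · linarith
      nlinarith [mul_pos hIstar hfR, mul_pos (mul_pos hIstar hk1) hfR,
        mul_nonneg (mul_nonneg hIstar.le hk1.le) (neg_nonneg.mpr hdivle)]
end

section
/- Let k > 1 and let f : ℝ → ℝ be a positive function differentiable on [0, 1]. Define g(R) = (k−1)/((k−1)/k − R) for R ≠ (k−1)/k. Let (I*, R*) be an endemic equilibrium, i.e., I* > 0, f(R*)·(1 − I* − R*) = k and (k−1)·I* = R*, and suppose f'(R*) ≠ g'(R*). Then either f'(R*) < f(R*)²/(k−1) (so that every complex eigenvalue of the Jacobian J(I*, R*) has negative real part), or there exists another endemic equilibrium (Ī*, R̄*) with R̄* > R*, i.e., there exists R̄* ∈ (R*, (k−1)/k) with f(R̄*) = g(R̄*). -/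
/-! At an endemic equilibrium `f R* = g R*`, hence `g' R* = f(R*)² / (k - 1)`. The Jacobian has
negative trace and determinant `I* k (f(R*)² - (k - 1) f'(R*)) / f(R*)`, so when
`f' R* < g' R*` both eigenvalues lie in the open left half-plane. Otherwise `f' R* > g' R*`, so
`f - g` is positive just right of `R*`; as `f` is bounded on `[0, 1]` while `g → +∞` at
`(k - 1) / k`, the intermediate value theorem gives a second zero of `f - g` in between. -/

open Filter Set Topology Polynomial

theorem Complex.re_neg_of_sq_sub_mul_add_eq_zero {T D : ℝ} (hT : T < 0) (hD : 0 < D) {μ : ℂ}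
    (h : μ ^ 2 - T * μ + D = 0) : μ.re < 0 := by
  have hre := congrArg Complex.re h
  have him := congrArg Complex.im h
  simp only [sq, sub_re, add_re, mul_re, ofReal_re, ofReal_im, sub_im, add_im, mul_im,
    zero_re, zero_im] at hre him
  rcases eq_or_ne μ.im 0 with hreal | hcomplex
  · rw [hreal] at hre
    nlinarith
  · -- a non-real root has real part `T / 2`
    have : 2 * μ.re = T := by
      apply mul_left_cancel₀ hcomplex
      linear_combination him
    linarith

theorem Matrix.re_neg_of_isRoot_charpoly_map {A : Matrix (Fin 2) (Fin 2) ℝ} (htr : A.trace < 0)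
    (hdet : 0 < A.det) {μ : ℂ} (hμ : (A.map Complex.ofReal).charpoly.IsRoot μ) :
    μ.re < 0 := by
  change (A.map Complex.ofRealHom).charpoly.IsRoot μ at hμ
  rw [Matrix.charpoly_map, IsRoot, eval_map, Matrix.charpoly_fin_two] at hμ
  exact Complex.re_neg_of_sq_sub_mul_add_eq_zero htr hdet (by simpa using hμ)

theorem HasDerivAt.eventually_nhdsGT_lt {φ : ℝ → ℝ} {a d : ℝ} (h : HasDerivAt φ d a)
    (hd : 0 < d) : ∀ᶠ x in 𝓝[>] a, φ a < φ x := by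
  have hslope := (hasDerivAt_iff_tendsto_slope.mp h).eventually (lt_mem_nhds hd)
  filter_upwards [nhdsWithin_mono a (fun x hx => ne_of_gt hx) hslope, self_mem_nhdsWithin]
    with x hx hax
  exact (slope_pos_iff hax).mp hx

theorem exists_mem_Ioo_eq_of_hasDerivAt_lt {f g : ℝ → ℝ} {a b f' g' : ℝ} (hab : a < b)
    (hf : HasDerivAt f f' a) (hg : HasDerivAt g g' a) (hlt : g' < f') (heq : f a = g a)
    (hfc : ContinuousOn f (Ioo a b)) (hgc : ContinuousOn g (Ioo a b))
    (hfb : BddAbove (f '' Ioo a b)) (hgb : Tendsto g (𝓝[<] b) atTop) :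
    ∃ c ∈ Ioo a b, f c = g c := by
  obtain ⟨x, hfgx, hx⟩ :=
    (((hf.sub hg).eventually_nhdsGT_lt (sub_pos.2 hlt)).and (Ioo_mem_nhdsGT hab)).exists
  obtain ⟨M, hM⟩ := hfb
  obtain ⟨y, hgy, hy⟩ :=
    ((hgb.eventually_gt_atTop M).and (Ioo_mem_nhdsLT hx.2)).exists
  have hsub : Icc x y ⊆ Ioo a b := Icc_subset_Ioo hx.1 hy.2
  have hfy : f y < g y := (hM ⟨y, ⟨hx.1.trans hy.1, hy.2⟩, rfl⟩).trans_lt hgy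
  obtain ⟨c, hc, hfgc⟩ := intermediate_value_Ioo' hy.1.le ((hfc.sub hgc).mono hsub)
    ⟨sub_neg.2 hfy, by simpa [heq] using hfgx⟩
  exact ⟨c, hsub (Ioo_subset_Icc_self hc), sub_eq_zero.1 hfgc⟩

theorem hasDerivAt_const_div_const_sub (c : ℝ) {b x : ℝ} (hx : x ≠ b) :
    HasDerivAt (fun R => c / (b - R)) ((c / (b - x)) ^ 2 / c) x := by
  have hbx : b - x ≠ 0 := sub_ne_zero.2 hx.symm
  have h : HasDerivAt (fun R => c * (b - R)⁻¹) (c * (-(-1) / (b - x) ^ 2)) x :=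
    (((hasDerivAt_id' x).const_sub b).inv hbx).const_mul c
  simp only [← div_eq_mul_inv] at h
  convert h using 1
  rcases eq_or_ne c 0 with rfl | hc
  · simp
  · field_simp

theorem tendsto_const_div_const_sub_nhdsLT_atTop {c : ℝ} (hc : 0 < c) (b : ℝ) :
    Tendsto (fun R => c / (b - R)) (𝓝[<] b) atTop := by
  have hsub : Tendsto (fun R => b - R) (𝓝[<] b) (𝓝[>] 0) := by
    refine tendsto_nhdsWithin_iff.2 ⟨?_, ?_⟩
    · simpa using ((continuous_sub_left b).tendsto b).mono_left nhdsWithin_le_nhds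
    · filter_upwards [self_mem_nhdsWithin] with R hR using sub_pos.2 (mem_Iio.1 hR)
  simpa [div_eq_mul_inv] using hsub.inv_tendsto_nhdsGT_zero.const_mul_atTop hc

section SIR

variable {k F F' I R : ℝ}

theorem sir_equilibrium_mul_eq (hk : 1 < k) (h1 : F * (1 - I - R) = k) (h2 : (k - 1) * I = R) :
    F * ((k - 1) / k - R) = k - 1 := by
  have : k - 1 ≠ 0 := by linarith
  field_simp
  linear_combination (k - 1) * h1 + F * h2

theorem sir_equilibrium_mem_Ioo (hk : 1 < k) (hF : 0 < F) (hI : 0 < I)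
    (h1 : F * (1 - I - R) = k) (h2 : (k - 1) * I = R) : R ∈ Ioo 0 ((k - 1) / k) := by
  have hk1 : 0 < k - 1 := by linarith
  have hmul : 0 < F * ((k - 1) / k - R) := by
    rwa [sir_equilibrium_mul_eq hk h1 h2]
  exact ⟨h2 ▸ mul_pos hk1 hI, sub_pos.1 (pos_of_mul_pos_right hmul hF.le)⟩

theorem sir_equilibrium_eq_div (hk : 1 < k) (hF : 0 < F) (hI : 0 < I)
    (h1 : F * (1 - I - R) = k) (h2 : (k - 1) * I = R) : F = (k - 1) / ((k - 1) / k - R) := by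
  have hR := sir_equilibrium_mem_Ioo hk hF hI h1 h2
  rw [eq_div_iff (sub_pos.2 hR.2).ne', sir_equilibrium_mul_eq hk h1 h2]

theorem sir_jacobian_trace_neg (hI : 0 < I) (hF : 0 < F) :
    Matrix.trace !![-I * F, I * (F' * k / F - F); k - 1, -1] < 0 := by
  rw [Matrix.trace_fin_two_of]
  nlinarith [mul_pos hI hF]

theorem sir_jacobian_det_pos (hk : 1 < k) (hI : 0 < I) (hF : 0 < F) (hF' : F' < F ^ 2 / (k - 1)) :
    0 < Matrix.det !![-I * F, I * (F' * k / F - F); k - 1, -1] := by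
  have hk1 : 0 < k - 1 := by linarith
  have hdet : -I * F * -1 - I * (F' * k / F - F) * (k - 1) =
      I * k * (F ^ 2 - F' * (k - 1)) / F := by
    field_simp
    ring
  rw [Matrix.det_fin_two_of, hdet]
  have := (lt_div_iff₀ hk1).1 hF'
  exact div_pos (mul_pos (mul_pos hI (by linarith)) (by linarith)) hF

end SIR

/-- At an endemic equilibrium with f'(R*) ≠ g'(R*), either the equilibrium is
locally stable (f'(R*) < f(R*)²/(k−1), so every complex eigenvalue of the
Jacobian has negative real part) or there is another endemic equilibrium with
a larger R-coordinate. -/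
theorem sir_endemic_equilibrium_stable_or_another
    (k : ℝ) (hk : 1 < k)
    (f : ℝ → ℝ) (hf_pos : ∀ x, 0 < f x)
    (hf_diff : DifferentiableOn ℝ f (Set.Icc 0 1))
    (g : ℝ → ℝ) (hg : ∀ R, g R = (k - 1) / ((k - 1) / k - R))
    (Istar Rstar : ℝ) (hIstar : 0 < Istar)
    (heq1 : f Rstar * (1 - Istar - Rstar) = k)
    (heq2 : (k - 1) * Istar = Rstar)
    (hderiv_ne : deriv f Rstar ≠ deriv g Rstar)
    (J : Matrix (Fin 2) (Fin 2) ℝ)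
    (hJ : J = !![-Istar * f Rstar, Istar * (deriv f Rstar * k / f Rstar - f Rstar);
                 k - 1, -1]) :
    (deriv f Rstar < (f Rstar) ^ 2 / (k - 1) ∧
      ∀ μ : ℂ, (J.map Complex.ofReal).charpoly.IsRoot μ → μ.re < 0) ∨
    (∃ Rbar ∈ Set.Ioo Rstar ((k - 1) / k), f Rbar = g Rbar) := by
  obtain rfl : g = fun R => (k - 1) / ((k - 1) / k - R) := funext hg
  have hR := sir_equilibrium_mem_Ioo hk (hf_pos Rstar) hIstar heq1 heq2
  have hfR := sir_equilibrium_eq_div hk (hf_pos Rstar) hIstar heq1 heq2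
  have hg' := hasDerivAt_const_div_const_sub (k - 1) hR.2.ne
  rw [← hfR] at hg'
  rw [hg'.deriv] at hderiv_ne
  rcases hderiv_ne.lt_or_gt with hlt | hgt
  · subst hJ
    exact .inl ⟨hlt, fun μ => Matrix.re_neg_of_isRoot_charpoly_map
      (sir_jacobian_trace_neg hIstar (hf_pos Rstar))
      (sir_jacobian_det_pos hk hIstar (hf_pos Rstar) hlt)⟩
  · have hb1 : (k - 1) / k < 1 := (div_lt_one (by linarith)).2 (by linarith)
    have hsub : Ioo Rstar ((k - 1) / k) ⊆ Icc 0 1 := Ioo_subset_Icc_self.trans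
      (Icc_subset_Icc hR.1.le hb1.le)
    have hf' : HasDerivAt f (deriv f Rstar) Rstar :=
      (hf_diff.differentiableAt (Icc_mem_nhds hR.1 (hR.2.trans hb1))).hasDerivAt
    refine .inr (exists_mem_Ioo_eq_of_hasDerivAt_lt hR.2 hf' hg' hgt hfR
      (hf_diff.continuousOn.mono hsub) ?_
      ((isCompact_Icc.bddAbove_image hf_diff.continuousOn).mono (image_mono hsub))
      (tendsto_const_div_const_sub_nhdsLT_atTop (by linarith) _))
    exact continuousOn_const.div (by fun_prop) fun R hR' => (sub_pos.2 hR'.2).ne'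
end

section
/- Let k > 1 and let f : ℝ → ℝ be a positive function differentiable on [0, 1] that is non-increasing on [0, 1]. If f(0)/k > 1, then there exists a unique R* ∈ (0, (k−1)/k) with f(R*) = (k−1)/((k−1)/k − R*); thus the system has a unique endemic equilibrium (I*, R*) = (R*/(k−1), R*), and every complex eigenvalue of the Jacobian matrix J(I*, R*) = [[−I*·f(R*), I*·(f'(R*)·k/f(R*) − f(R*))], [k−1, −1]] has negative real part. -/
open Polynomial in
lemma charpoly_root_fin_two_aux (M : Matrix (Fin 2) (Fin 2) ℂ) (μ : ℂ)
    (h : M.charpoly.IsRoot μ) :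
    (μ - M 0 0) * (μ - M 1 1) - M 0 1 * M 1 0 = 0 := by
  have hc : M.charpoly = (X - C (M 0 0)) * (X - C (M 1 1)) - C (M 0 1) * C (M 1 0) := by
    rw [Matrix.charpoly, Matrix.det_fin_two]
    rw [Matrix.charmatrix_apply_eq, Matrix.charmatrix_apply_eq,
      Matrix.charmatrix_apply_ne _ _ _ (by decide), Matrix.charmatrix_apply_ne _ _ _ (by decide)]
    ring
  have := h
  rw [Polynomial.IsRoot, hc] at this
  simpa using this

lemma deriv_nonpos_of_antitoneOn (f : ℝ → ℝ) (x : ℝ) (hx : x ∈ Set.Ioo (0:ℝ) 1)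
    (hdiff : DifferentiableOn ℝ f (Set.Icc 0 1))
    (hanti : AntitoneOn f (Set.Icc 0 1)) : deriv f x ≤ 0 := by
  have hmem : Set.Icc (0:ℝ) 1 ∈ nhds x := Icc_mem_nhds hx.1 hx.2
  have hda : DifferentiableAt ℝ f x :=
    (hdiff x ⟨hx.1.le, hx.2.le⟩).differentiableAt hmem
  have hslope : Filter.Tendsto (slope f x) (nhdsWithin x {x}ᶜ) (nhds (deriv f x)) :=
    hasDerivAt_iff_tendsto_slope.mp hda.hasDerivAt
  have hslope' : Filter.Tendsto (slope f x) (nhdsWithin x (Set.Ioi x)) (nhds (deriv f x)) :=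
    hslope.mono_left (nhdsWithin_mono _ (fun y hy => ne_of_gt hy))
  refine le_of_tendsto hslope' ?_
  filter_upwards [Ioo_mem_nhdsGT_of_mem ⟨le_refl x, hx.2⟩] with y hy
  have hyx : x < y := hy.1
  have hfy : f y ≤ f x := hanti ⟨hx.1.le, hx.2.le⟩ ⟨(hx.1.trans hyx).le, hy.2.le⟩ hyx.le
  rw [slope_def_field]
  exact div_nonpos_of_nonpos_of_nonneg (by linarith) (by linarith)

/-- If f is non-increasing on [0,1] and f(0)/k > 1, then there is a unique
endemic equilibrium (R*/(k−1), R*), and it is locally stable: every complex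
eigenvalue of the Jacobian there has negative real part. -/
theorem sir_unique_stable_endemic_equilibrium_of_nonincreasing
    (k : ℝ) (hk : 1 < k)
    (f : ℝ → ℝ) (hf_pos : ∀ x, 0 < f x)
    (hf_diff : DifferentiableOn ℝ f (Set.Icc 0 1))
    (hf_anti : AntitoneOn f (Set.Icc 0 1))
    (hf0 : 1 < f 0 / k) :
    (∃! Rstar : ℝ, Rstar ∈ Set.Ioo (0 : ℝ) ((k - 1) / k) ∧
      f Rstar = (k - 1) / ((k - 1) / k - Rstar)) ∧
    (∀ Rstar ∈ Set.Ioo (0 : ℝ) ((k - 1) / k),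
      f Rstar = (k - 1) / ((k - 1) / k - Rstar) →
      ∀ μ : ℂ,
        ((!![-(Rstar / (k - 1)) * f Rstar,
             (Rstar / (k - 1)) * (deriv f Rstar * k / f Rstar - f Rstar);
             k - 1, -1] : Matrix (Fin 2) (Fin 2) ℝ).map Complex.ofReal).charpoly.IsRoot μ →
        μ.re < 0) := by
  have hk0 : (0:ℝ) < k := by linarith
  have hk1 : (0:ℝ) < k - 1 := by linarith
  have hc0 : 0 < (k - 1) / k := div_pos hk1 hk0
  have hc1 : (k - 1) / k < 1 := by rw [div_lt_one hk0]; linarith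
  have hfk : k < f 0 := by
    have := (one_lt_div hk0).mp hf0; linarith
  have hf00 : 0 < f 0 := hf_pos 0
  have huniq : ∀ R1 ∈ Set.Ioo (0:ℝ) ((k-1)/k), ∀ R2 ∈ Set.Ioo (0:ℝ) ((k-1)/k),
      f R1 = (k-1)/((k-1)/k - R1) → f R2 = (k-1)/((k-1)/k - R2) → R1 = R2 := by
    intro R1 h1 R2 h2 e1 e2
    have key : ∀ a ∈ Set.Ioo (0:ℝ) ((k-1)/k), ∀ b ∈ Set.Ioo (0:ℝ) ((k-1)/k),
        f a = (k-1)/((k-1)/k - a) → f b = (k-1)/((k-1)/k - b) → a < b → False := by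
      intro a ha b hb ea eb hab
      have hfab : f b ≤ f a :=
        hf_anti ⟨ha.1.le, (ha.2.trans hc1).le⟩ ⟨hb.1.le, (hb.2.trans hc1).le⟩ hab.le
      have hg : (k-1)/((k-1)/k - a) < (k-1)/((k-1)/k - b) := by
        apply div_lt_div_of_pos_left hk1 (by linarith [hb.2]) (by linarith)
      rw [← ea, ← eb] at hg
      linarith
    rcases lt_trichotomy R1 R2 with h | h | h
    · exact absurd (key R1 h1 R2 h2 e1 e2 h) (by simp)
    · exact h
    · exact absurd (key R2 h2 R1 h1 e2 e1 h) (by simp)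
  constructor
  · -- existence and uniqueness
    set R0 : ℝ := (k - 1) / k - (k - 1) / (2 * f 0) with hR0
    have h2f0 : (0:ℝ) < 2 * f 0 := by linarith
    have hdpos : 0 < (k - 1) / (2 * f 0) := div_pos hk1 h2f0
    have hR0c : R0 < (k - 1) / k := by rw [hR0]; linarith
    have hR00 : 0 < R0 := by
      rw [hR0, sub_pos]
      exact div_lt_div_of_pos_left hk1 hk0 (by linarith)
    have hR01 : R0 ≤ 1 := hR0c.le.trans hc1.le
    have hcont : ContinuousOn (fun R => f R - (k - 1) / ((k - 1) / k - R)) (Set.Icc 0 R0) := by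
      apply ContinuousOn.sub
      · exact hf_diff.continuousOn.mono (fun y hy => ⟨hy.1, hy.2.trans hR01⟩)
      · apply ContinuousOn.div continuousOn_const (by fun_prop)
        intro y hy
        have : y < (k - 1) / k := lt_of_le_of_lt hy.2 hR0c
        intro h; rw [sub_eq_zero] at h; linarith [h]
    have hv0 : (fun R => f R - (k - 1) / ((k - 1) / k - R)) 0 = f 0 - k := by
      simp only [sub_zero]
      rw [div_div_cancel₀ (ne_of_gt hk1)]
    have hvR0 : (fun R => f R - (k - 1) / ((k - 1) / k - R)) R0 ≤ f 0 - 2 * f 0 := by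
      show f R0 - (k - 1) / ((k - 1) / k - R0) ≤ f 0 - 2 * f 0
      have hden : (k - 1) / k - R0 = (k - 1) / (2 * f 0) := by rw [hR0]; ring
      rw [hden, div_div_cancel₀ (ne_of_gt hk1)]
      have : f R0 ≤ f 0 := hf_anti (by simp) ⟨hR00.le, hR01⟩ hR00.le
      linarith
    have h0mem : (0:ℝ) ∈ Set.Ioo ((fun R => f R - (k - 1) / ((k - 1) / k - R)) R0)
        ((fun R => f R - (k - 1) / ((k - 1) / k - R)) 0) := by
      refine ⟨lt_of_le_of_lt hvR0 (by linarith), ?_⟩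
      rw [hv0]; linarith
    obtain ⟨Rs, hRs, hRsv⟩ := intermediate_value_Ioo' hR00.le hcont h0mem
    refine ⟨Rs, ⟨⟨hRs.1, hRs.2.trans hR0c⟩, by simpa [sub_eq_zero] using hRsv⟩, ?_⟩
    intro y hy
    exact huniq y hy.1 Rs ⟨hRs.1, hRs.2.trans hR0c⟩ hy.2
      (by simpa [sub_eq_zero] using hRsv)
  · -- stability
    intro Rstar hR heq μ hroot
    have hFpos : 0 < f Rstar := hf_pos Rstar
    have hIpos : 0 < Rstar / (k - 1) := div_pos hR.1 hk1
    have hd : deriv f Rstar ≤ 0 :=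
      deriv_nonpos_of_antitoneOn f Rstar ⟨hR.1, hR.2.trans hc1⟩ hf_diff hf_anti
    set F := f Rstar with hF
    set I := Rstar / (k - 1) with hI
    set d := deriv f Rstar with hdd
    set b := I * (d * k / F - F) with hb
    have hdkF : d * k / F ≤ 0 :=
      div_nonpos_of_nonpos_of_nonneg (mul_nonpos_of_nonpos_of_nonneg hd hk0.le) hFpos.le
    have hbneg : b ≤ -(I * F) := by
      rw [hb]; nlinarith
    have hIF : 0 < I * F := mul_pos hIpos hFpos
    have heq2 := charpoly_root_fin_two_aux _ μ hroot
    have e00 : (!![-I * F, b; k - 1, -1] : Matrix (Fin 2) (Fin 2) ℝ) 0 0 = -(I * F) := by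
      norm_num
    have e01 : (!![-I * F, b; k - 1, -1] : Matrix (Fin 2) (Fin 2) ℝ) 0 1 = b := by norm_num
    have e10 : (!![-I * F, b; k - 1, -1] : Matrix (Fin 2) (Fin 2) ℝ) 1 0 = k - 1 := by norm_num
    have e11 : (!![-I * F, b; k - 1, -1] : Matrix (Fin 2) (Fin 2) ℝ) 1 1 = -1 := by norm_num
    simp only [Matrix.map_apply, e00, e01, e10, e11] at heq2
    rw [Complex.ext_iff] at heq2
    obtain ⟨h1, h2⟩ := heq2
    simp only [Complex.sub_re, Complex.sub_im, Complex.mul_re, Complex.mul_im,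
      Complex.ofReal_re, Complex.ofReal_im, Complex.zero_re, Complex.zero_im,
      Complex.neg_re, Complex.neg_im, Complex.one_re, Complex.one_im,
      Complex.ofReal_neg, Complex.ofReal_mul, Complex.ofReal_sub, Complex.ofReal_one] at h1 h2
    have hre : μ.re ^ 2 - μ.im ^ 2 + (I * F + 1) * μ.re + (I * F - b * (k - 1)) = 0 := by
      linear_combination h1
    have him : μ.im * (2 * μ.re + (I * F + 1)) = 0 := by
      linear_combination h2
    have hD : 0 < I * F - b * (k - 1) := by
      nlinarith [mul_le_mul_of_nonneg_right hbneg hk1.le, mul_pos hIF hk1]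
    rcases mul_eq_zero.mp him with hy | hx
    · rw [hy] at hre
      nlinarith [hre, hD, hIF, sq_nonneg μ.re]
    · linarith [hIF]
end

section
/- Let k > 1 and let f : ℝ → ℝ be a positive, continuously differentiable function with f(0) > k. Suppose I, R : ℝ → ℝ are differentiable and satisfy, for all t ≥ 0, I'(t) = I(t)·(f(R(t))·(1 − I(t) − R(t)) − k) and R'(t) = (k−1)·I(t) − R(t), with I(0) ≥ 0 and R(0) ≥ 0, and suppose (I(t), R(t)) → (0, 0) as t → ∞. Then I(t) = 0 for all t ≥ 0. -/
/-!
Writing `g t = f (R t) * (1 - I t - R t) - k`, the infected population solves the linear equation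
`I' = g I`, so `I t = I 0 * exp (∫₀ᵗ g)`. Along a solution tending to the disease-free equilibrium,
`g` tends to `f 0 - k > 0`; once `g ≥ 0`, `|I|` is nondecreasing, which is compatible with `I → 0`
only if `I` vanishes there, and then `I 0 = 0` by the exponential formula.
-/

open Filter Topology

theorem eq_mul_exp_integral_of_hasDerivAt {I g : ℝ → ℝ} {a t : ℝ} (hg : Continuous g)
    (hI : ∀ s, a ≤ s → HasDerivAt I (I s * g s) s) (ht : a ≤ t) :
    I t = I a * Real.exp (∫ s in a..t, g s) := by
  set G : ℝ → ℝ := fun u => ∫ s in a..u, g s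
  have hG : ∀ s, HasDerivAt G (g s) s := fun s => (hg.integral_hasStrictDerivAt a s).hasDerivAt
  have hconst : ∀ s ∈ Set.Icc a t, I s * Real.exp (-G s) = I a * Real.exp (-G a) := by
    refine constant_of_has_deriv_right_zero (fun s hs => ?_) fun s hs => ?_
    · exact ((hI s hs.1).continuousAt.mul (hG s).neg.exp.continuousAt).continuousWithinAt
    · refine (((hI s hs.1).mul (hG s).neg.exp).congr_deriv ?_).hasDerivWithinAt
      simp only [Pi.neg_apply]
      ring
  have hIt : I t * Real.exp (-G t) = I a := by simpa [G] using hconst t ⟨ht, le_rfl⟩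
  rw [← hIt, mul_assoc, ← Real.exp_add, neg_add_cancel, Real.exp_zero, mul_one]

theorem eq_zero_of_hasDerivAt_eq_mul_of_tendsto_zero {I g : ℝ → ℝ} {a t : ℝ} (hg : Continuous g)
    (hI : ∀ s, a ≤ s → HasDerivAt I (I s * g s) s) (hg_nonneg : ∀ᶠ s in atTop, 0 ≤ g s)
    (hI_lim : Tendsto I atTop (𝓝 0)) (ht : a ≤ t) : I t = 0 := by
  obtain ⟨T₀, hT₀⟩ := hg_nonneg.exists_forall_of_atTop
  set T := max a T₀
  have hIT : I T = 0 := by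
    by_contra hne
    have habs_mono : ∀ s, T ≤ s → |I T| ≤ |I s| := fun s hs => by
      rw [eq_mul_exp_integral_of_hasDerivAt hg (fun u hu => hI u ((le_max_left _ _).trans hu)) hs,
        abs_mul, Real.abs_exp]
      refine le_mul_of_one_le_right (abs_nonneg _) (Real.one_le_exp ?_)
      exact intervalIntegral.integral_nonneg hs fun u hu => hT₀ u ((le_max_right _ _).trans hu.1)
    obtain ⟨s, hs_small, hs_large⟩ :=
      ((Metric.tendsto_nhds.mp hI_lim) |I T| (abs_pos.mpr hne)).and (eventually_ge_atTop T) |>.exists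
    rw [Real.dist_eq, sub_zero] at hs_small
    exact (habs_mono s hs_large).not_gt hs_small
  have hIa : I a = 0 := by
    simpa [Real.exp_ne_zero] using (eq_mul_exp_integral_of_hasDerivAt hg hI (le_max_left a T₀)).symm.trans hIT
  rw [eq_mul_exp_integral_of_hasDerivAt hg hI ht, hIa, zero_mul]

theorem sir_stable_manifold_is_axis_general
    (k : ℝ)
    (f : ℝ → ℝ) (hf_smooth : ContDiff ℝ 1 f)
    (hf0 : k < f 0)
    (I R : ℝ → ℝ)
    (hI : Differentiable ℝ I) (hR : Differentiable ℝ R)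
    (hIode : ∀ t, 0 ≤ t → deriv I t = I t * (f (R t) * (1 - I t - R t) - k))
    (hconv : Filter.Tendsto (fun t => (I t, R t)) Filter.atTop (nhds (0, 0))) :
    ∀ t, 0 ≤ t → I t = 0 := by
  set g : ℝ → ℝ := fun t => f (R t) * (1 - I t - R t) - k
  have hf : Continuous f := hf_smooth.continuous
  have hg : Continuous g := by
    have := hI.continuous
    have := hR.continuous
    fun_prop
  have hI' : ∀ t, 0 ≤ t → HasDerivAt I (I t * g t) t := fun t ht => hIode t ht ▸ (hI t).hasDerivAt
  have hg_lim : Tendsto g atTop (𝓝 (f 0 * (1 - 0 - 0) - k)) :=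
    (((hf.tendsto 0).comp hconv.snd_nhds).mul
      ((tendsto_const_nhds.sub hconv.fst_nhds).sub hconv.snd_nhds)).sub_const k
  have hg_nonneg : ∀ᶠ t in atTop, 0 ≤ g t :=
    hg_lim.eventually (eventually_ge_nhds (by linarith))
  exact fun t ht => eq_zero_of_hasDerivAt_eq_mul_of_tendsto_zero hg hI' hg_nonneg hconv.fst_nhds ht

/-- When f(0) > k, the stable manifold of the disease-free equilibrium is the
axis I = 0: any nonnegative solution converging to (0,0) must have I ≡ 0. -/
theorem sir_stable_manifold_is_axis
    (k : ℝ) (hk : 1 < k)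
    (f : ℝ → ℝ) (hf_pos : ∀ x, 0 < f x) (hf_smooth : ContDiff ℝ 1 f)
    (hf0 : k < f 0)
    (I R : ℝ → ℝ)
    (hI : Differentiable ℝ I) (hR : Differentiable ℝ R)
    (hIode : ∀ t, 0 ≤ t → deriv I t = I t * (f (R t) * (1 - I t - R t) - k))
    (hRode : ∀ t, 0 ≤ t → deriv R t = (k - 1) * I t - R t)
    (hI0 : 0 ≤ I 0) (hR0 : 0 ≤ R 0)
    (hconv : Filter.Tendsto (fun t => (I t, R t)) Filter.atTop (nhds (0, 0))) :
    ∀ t, 0 ≤ t → I t = 0 :=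
  sir_stable_manifold_is_axis_general k f hf_smooth hf0 I R hI hR hIode hconv
end
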